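/- arXiv:math/9808146 — 5 statements merged into one kernel-verified Lean document; each statement's English description precedes it below -/
import Mathlib

section
/- There exist infinitely many pairwise non-isomorphic finite 2-groups that do not satisfy property (*). -/
/-- A group `G` satisfies property (*) if it embeds as a subgroup of index 2 in
some group `Γ` generated by involutions (elements of order exactly 2). -/
def SatisfiesStar (G : Type*) [Group G] : Prop :=
  ∃ (Γ : Type) (_ : Group Γ) (f : G →* Γ),
    Function.Injective f ∧ f.range.index = 2 ∧
    Subgroup.closure {x : Γ | orderOf x = 2} = ⊤

/-- Two groups are non-isomorphic if there is no multiplicative equivalence between them. -/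
def NonIsomorphic (G H : Type*) [Group G] [Group H] : Prop := IsEmpty (G ≃* H)

namespace Cex

@[ext]
structure Gr (m : ℕ) : Type where
  fst : ZMod (2^(m+4))
  snd : ZMod 4

variable {m : ℕ}

instance : NeZero (2^(m+4)) := ⟨by positivity⟩

def grEquiv (m : ℕ) : Gr m ≃ ZMod (2^(m+4)) × ZMod 4 where
  toFun g := (g.fst, g.snd)
  invFun p := ⟨p.1, p.2⟩
  left_inv g := rfl
  right_inv p := rfl

instance : Finite (Gr m) := Finite.of_equiv _ (grEquiv m).symm

/-- the twisting term: `δ v = 2^(m+2) * v` -/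
def δ (v : ZMod 4) : ZMod (2^(m+4)) := ((2^(m+2) * v.val : ℕ) : ZMod (2^(m+4)))

lemma δ_zero : (δ 0 : ZMod (2^(m+4))) = 0 := by simp [δ]

lemma pow_shift : ((2:ℕ)^(m+4)) = 2^(m+2) * 4 := by rw [show m+4 = (m+2)+2 by omega, pow_add]; norm_num

lemma δ_add (v w : ZMod 4) : (δ (v+w) : ZMod (2^(m+4))) = δ v + δ w := by
  have h : (v + w).val = (v.val + w.val) % 4 := ZMod.val_add v w
  have e : 2^(m+2) * (v.val + w.val)
      = 2^(m+4) * ((v.val + w.val)/4) + 2^(m+2) * ((v.val + w.val) % 4) := by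
    conv_lhs => rw [show v.val + w.val = 4*((v.val + w.val)/4) + (v.val + w.val) % 4 from
      (Nat.div_add_mod _ 4).symm]
    rw [pow_shift]; ring
  calc (δ (v+w) : ZMod (2^(m+4)))
      = ((2^(m+2) * ((v.val + w.val) % 4) : ℕ) : ZMod (2^(m+4))) := by rw [δ, h]
    _ = ((2^(m+4) * ((v.val + w.val)/4) + 2^(m+2) * ((v.val + w.val) % 4) : ℕ) :
          ZMod (2^(m+4))) := by
        rw [Nat.cast_add, Nat.cast_mul, Nat.cast_mul, ZMod.natCast_self, zero_mul, zero_add]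
    _ = ((2^(m+2) * (v.val + w.val) : ℕ) : ZMod (2^(m+4))) := by rw [← e]
    _ = δ v + δ w := by rw [δ, δ]; push_cast; ring

lemma δ_mul (v w : ZMod 4) : (δ v : ZMod (2^(m+4))) * δ w = 0 := by
  have e : (2^(m+2) * v.val) * (2^(m+2) * w.val) = 2^(m+4) * (2^m * (v.val * w.val)) := by
    have h2 : (2:ℕ)^(m+2) * 2^(m+2) = 2^(m+4) * 2^m := by
      rw [← pow_add, ← pow_add]; congr 1; omega
    calc (2^(m+2) * v.val) * (2^(m+2) * w.val) = (2^(m+2) * 2^(m+2)) * (v.val * w.val) := by ring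
      _ = 2^(m+4) * (2^m * (v.val * w.val)) := by rw [h2]; ring
  rw [δ, δ, ← Nat.cast_mul, e, Nat.cast_mul, ZMod.natCast_self, zero_mul]

lemma δ_neg (v : ZMod 4) : (δ (-v) : ZMod (2^(m+4))) = - δ v := by
  have h := δ_add (m := m) (-v) v
  rw [neg_add_cancel, δ_zero] at h
  exact eq_neg_of_add_eq_zero_left h.symm

instance : Mul (Gr m) := ⟨fun g h => ⟨g.fst + h.fst + δ g.snd * h.fst, g.snd + h.snd⟩⟩
instance : One (Gr m) := ⟨⟨0,0⟩⟩
instance : Inv (Gr m) := ⟨fun g => ⟨-g.fst + δ g.snd * g.fst, -g.snd⟩⟩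

lemma mul_def (g h : Gr m) :
    g * h = ⟨g.fst + h.fst + δ g.snd * h.fst, g.snd + h.snd⟩ := rfl
lemma one_def : (1 : Gr m) = ⟨0,0⟩ := rfl
lemma inv_def (g : Gr m) : g⁻¹ = ⟨-g.fst + δ g.snd * g.fst, -g.snd⟩ := rfl

instance : Group (Gr m) := Group.ofLeftAxioms
  (by
    intro a b c
    simp only [mul_def, δ_add]
    ext <;> simp only
    · have h0 : (δ a.snd : ZMod (2^(m+4))) * δ b.snd = 0 := δ_mul _ _
      linear_combination (-c.fst) * h0
    · exact add_assoc _ _ _)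
  (by intro a; simp [mul_def, one_def, δ_zero])
  (by
    intro a
    simp only [inv_def, mul_def, δ_neg, one_def]
    ext <;> simp only
    · ring
    · ring)


/-! ### coordinate maps -/

def ψ2 : ZMod (2^(m+4)) →+* ZMod 2 := ZMod.castHom (dvd_pow_self 2 (by omega)) _
def φ4 : ZMod (2^(m+4)) →+* ZMod 4 :=
  ZMod.castHom (show (4:ℕ) ∣ 2^(m+4) from ⟨2^(m+2), by rw [pow_shift]; ring⟩) (ZMod 4)
def χ : ZMod 4 →+* ZMod 2 := ZMod.castHom (show (2:ℕ) ∣ 4 by norm_num) (ZMod 2)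

lemma ψ2_apply (z : ZMod (2^(m+4))) : ψ2 z = ((z.val : ℕ) : ZMod 2) := by
  rw [ψ2, ZMod.castHom_apply, ZMod.natCast_val]
lemma φ4_apply (z : ZMod (2^(m+4))) : φ4 z = ((z.val : ℕ) : ZMod 4) := by
  rw [φ4, ZMod.castHom_apply, ZMod.natCast_val]
lemma χ_apply (z : ZMod 4) : χ z = ((z.val : ℕ) : ZMod 2) := by
  rw [χ, ZMod.castHom_apply, ZMod.natCast_val]

def c₁ (g : Gr m) : ZMod 2 := ψ2 g.fst
def c₂ (g : Gr m) : ZMod 2 := χ g.snd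

lemma ψ2_δ (v : ZMod 4) : ψ2 (δ v : ZMod (2^(m+4))) = 0 := by
  rw [δ, map_natCast]
  push_cast
  rw [show ((2:ZMod 2)) = 0 from by decide]
  simp

lemma c₁_mul (g h : Gr m) : c₁ (g*h) = c₁ g + c₁ h := by
  simp [c₁, mul_def, map_add, map_mul, ψ2_δ]
lemma c₂_mul (g h : Gr m) : c₂ (g*h) = c₂ g + c₂ h := by
  simp [c₂, mul_def, map_add]
lemma c₁_one : c₁ (1 : Gr m) = 0 := by simp [c₁, one_def]
lemma c₂_one : c₂ (1 : Gr m) = 0 := by simp [c₂, one_def]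

lemma zmod2_neg : ∀ z : ZMod 2, -z = z := by decide

lemma c₁_inv (g : Gr m) : c₁ g⁻¹ = c₁ g := by
  simp [c₁, inv_def, map_add, map_mul, map_neg, ψ2_δ, zmod2_neg]
lemma c₂_inv (g : Gr m) : c₂ g⁻¹ = c₂ g := by
  simp [c₂, inv_def, map_neg, zmod2_neg]

lemma c₁_pow (g : Gr m) (k : ℕ) : c₁ (g^k) = (k : ZMod 2) * c₁ g := by
  induction k with
  | zero => simp [c₁_one]
  | succ n ih => rw [pow_succ, c₁_mul, ih]; push_cast; ring

lemma c₂_pow (g : Gr m) (k : ℕ) : c₂ (g^k) = (k : ZMod 2) * c₂ g := by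
  induction k with
  | zero => simp [c₂_one]
  | succ n ih => rw [pow_succ, c₂_mul, ih]; push_cast; ring

lemma snd_mul (g h : Gr m) : (g*h).snd = g.snd + h.snd := rfl
lemma snd_one : (1 : Gr m).snd = 0 := rfl
lemma snd_pow (g : Gr m) (k : ℕ) : (g^k).snd = (k : ZMod 4) * g.snd := by
  induction k with
  | zero => rw [pow_zero, snd_one]; push_cast; ring
  | succ n ih => rw [pow_succ, snd_mul, ih]; push_cast; ring
lemma snd_inv (g : Gr m) : (g⁻¹).snd = -g.snd := rfl

/-! ### generators -/

def aa : Gr m := ⟨1, 0⟩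
def bb : Gr m := ⟨0, 1⟩

lemma aa_pow (k : ℕ) : (aa : Gr m)^k = ⟨(k : ZMod (2^(m+4))), 0⟩ := by
  induction k with
  | zero => rw [pow_zero, one_def]; push_cast; rfl
  | succ n ih =>
    rw [pow_succ, ih, mul_def]
    ext <;> simp [aa, δ_zero] <;> push_cast <;> ring

lemma bb_pow (k : ℕ) : (bb : Gr m)^k = ⟨0, (k : ZMod 4)⟩ := by
  induction k with
  | zero => rw [pow_zero, one_def]; push_cast; rfl
  | succ n ih =>
    rw [pow_succ, ih, mul_def]
    ext <;> simp [bb] <;> push_cast <;> ring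

lemma decomp (g : Gr m) : g = aa^(g.fst.val) * bb^(g.snd.val) := by
  rw [aa_pow, bb_pow, mul_def]
  ext <;> simp [δ_zero] <;> rw [ZMod.natCast_val, ZMod.cast_id]

lemma pow_p0 (x : ZMod (2^(m+4))) (k : ℕ) :
    (⟨x, 0⟩ : Gr m)^k = ⟨(k : ZMod (2^(m+4))) * x, 0⟩ := by
  induction k with
  | zero => rw [pow_zero, one_def]; ext <;> simp
  | succ n ih =>
    rw [pow_succ, ih, mul_def]
    ext <;> simp [δ_zero] <;> push_cast <;> ring

/-! ### the commutator identity -/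

lemma comm_eq (A B : Gr m) :
    B * A * B⁻¹ * A⁻¹ = ⟨δ B.snd * A.fst - δ A.snd * B.fst, 0⟩ := by
  have hAB : (δ A.snd : ZMod (2^(m+4))) * δ B.snd = 0 := δ_mul _ _
  have hBB : (δ B.snd : ZMod (2^(m+4))) * δ B.snd = 0 := δ_mul _ _
  have hBA : (δ B.snd : ZMod (2^(m+4))) * δ A.snd = 0 := δ_mul _ _
  have hAA : (δ A.snd : ZMod (2^(m+4))) * δ A.snd = 0 := δ_mul _ _
  simp only [mul_def, inv_def, δ_add, δ_neg]
  ext <;> simp only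
  · ring_nf
    linear_combination B.fst * hBA + B.fst * hBB + A.fst * hAA
  · ring

lemma rel_id : (bb : Gr m) * aa * bb⁻¹ * aa⁻¹ = aa ^ (2^(m+2)) := by
  rw [comm_eq, aa_pow]
  have h1 : (1 : ZMod 4).val = 1 := rfl
  ext <;> simp [aa, bb, δ, δ_zero, h1]

lemma q_mul_eq_zero_iff (z : ZMod (2^(m+4))) :
    ((2^(m+2) : ℕ) : ZMod (2^(m+4))) * z = 0 ↔ ((z.val : ℕ) : ZMod 4) = 0 := by
  conv_lhs => rw [show z = ((z.val : ℕ) : ZMod (2^(m+4))) from by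
    rw [ZMod.natCast_val, ZMod.cast_id]]
  rw [← Nat.cast_mul, ZMod.natCast_eq_zero_iff, ZMod.natCast_eq_zero_iff]
  generalize z.val = V
  rw [pow_shift, Nat.mul_dvd_mul_iff_left (by positivity : 0 < 2^(m+2))]


/-! ### small arithmetic helpers -/

lemma zmod2_cases : ∀ z : ZMod 2, z = 0 ∨ z = 1 := by decide

lemma two_zmod2 : (2 : ZMod 2) = 0 := by decide

lemma cast2_eq_zero {n : ℕ} (h : ((n:ℕ) : ZMod 2) = 0) : n % 2 = 0 := by
  have := (ZMod.natCast_eq_zero_iff n 2).mp h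
  omega

lemma cast2_eq_one {n : ℕ} (h : ((n:ℕ) : ZMod 2) = 1) : n % 2 = 1 := by
  rcases Nat.mod_two_eq_zero_or_one n with h0 | h1
  · exfalso
    have : ((n:ℕ) : ZMod 2) = 0 := (ZMod.natCast_eq_zero_iff n 2).mpr (by omega)
    rw [this] at h
    exact absurd h (by decide)
  · exact h1

lemma odd_cast4 {n : ℕ} (h : n % 2 = 1) : ((n:ℕ) : ZMod 4) = 1 ∨ ((n:ℕ) : ZMod 4) = 3 := by
  have h4 : n % 4 = 1 ∨ n % 4 = 3 := by omega
  rw [← ZMod.natCast_mod n 4]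
  rcases h4 with h'|h' <;> rw [h']
  · left; rfl
  · right; rfl

lemma even_cast4 {n : ℕ} (h : n % 2 = 0) : ((n:ℕ) : ZMod 4) = 0 ∨ ((n:ℕ) : ZMod 4) = 2 := by
  have h4 : n % 4 = 0 ∨ n % 4 = 2 := by omega
  rw [← ZMod.natCast_mod n 4]
  rcases h4 with h'|h' <;> rw [h']
  · left; rfl
  · right; rfl

lemma four_dvd : (4:ℕ) ∣ 2^(m+4) := ⟨2^(m+2), by rw [pow_shift]; ring⟩

/-! ### involutions have even coordinates -/

lemma invol_c (g : Gr m) (h : g * g = 1) : c₁ g = 0 ∧ c₂ g = 0 := by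
  have h1 : g.fst + g.fst + δ g.snd * g.fst = 0 := congrArg Gr.fst h
  have h2 : g.snd + g.snd = 0 := congrArg Gr.snd h
  have hv : g.snd = 0 ∨ g.snd = 2 := by
    have : ∀ v : ZMod 4, v + v = 0 → v = 0 ∨ v = 2 := by decide
    exact this _ h2
  constructor
  · -- parity of first coordinate
    rw [c₁, ψ2_apply]
    rw [show g.fst = ((g.fst.val : ℕ) : ZMod (2^(m+4))) from by
      rw [ZMod.natCast_val, ZMod.cast_id]] at h1
    rcases hv with hv | hv
    · rw [hv, δ_zero, zero_mul, add_zero, ← Nat.cast_add] at h1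
      have hdvd := (ZMod.natCast_eq_zero_iff _ _).mp h1
      have h4 := four_dvd (m := m)
      have : (4:ℕ) ∣ g.fst.val + g.fst.val := dvd_trans h4 hdvd
      apply (ZMod.natCast_eq_zero_iff _ _).mpr
      omega
    · rw [hv] at h1
      have hδ : (δ 2 : ZMod (2^(m+4))) = ((2^(m+2) * 2 : ℕ) : ZMod (2^(m+4))) := by
        rw [δ]; rfl
      rw [hδ, ← Nat.cast_mul, ← Nat.cast_add, ← Nat.cast_add] at h1
      have hdvd := (ZMod.natCast_eq_zero_iff _ _).mp h1
      generalize hV : g.fst.val = V at hdvd ⊢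
      have heq : V + V + 2^(m+2) * 2 * V
          = 2 * (V * (1 + 2^(m+2))) := by ring
      rw [heq, show (2:ℕ)^(m+4) = 2 * 2^(m+3) from by
        rw [show m+4 = (m+3)+1 by omega, pow_succ 2 (m+3)]; ring] at hdvd
      have hdvd2 : (2:ℕ)^(m+3) ∣ V * (1 + 2^(m+2)) :=
        (Nat.mul_dvd_mul_iff_left (by norm_num : (0:ℕ) < 2)).mp hdvd
      have h2' : (2:ℕ) ∣ V * (1 + 2^(m+2)) :=
        dvd_trans (dvd_pow_self 2 (by omega)) hdvd2
      have hev := (Nat.even_mul).mp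
        (Nat.even_iff.mpr (show (V * (1 + 2^(m+2))) % 2 = 0 by omega))
      have hodd : ¬ Even (1 + 2^(m+2)) := by
        have : (2:ℕ) ∣ 2^(m+2) := dvd_pow_self 2 (by omega)
        rw [Nat.even_iff]; omega
      apply (ZMod.natCast_eq_zero_iff _ _).mpr
      rcases hev with hev | hev
      · rw [Nat.even_iff] at hev; omega
      · exact absurd hev hodd
  · rcases hv with hv | hv <;> rw [c₂, hv, χ_apply] <;> decide

/-! ### the key lemma -/

lemma key (α : Gr m → Gr m) (hmul : ∀ g h, α (g * h) = α g * α h) :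
    ∃ s t : ZMod 2, (s ≠ 0 ∨ t ≠ 0) ∧
      (∀ g : Gr m, g * g = 1 → s * c₁ g + t * c₂ g = 0) ∧
      (∀ g : Gr m, α g = g⁻¹ → s * c₁ g + t * c₂ g = 0) := by
  have hone : α 1 = 1 := by
    have h := hmul 1 1
    rw [mul_one] at h
    exact left_eq_mul.mp h
  have hpow : ∀ g k, α (g^k) = (α g)^k := by
    intro g k
    induction k with
    | zero => simpa using hone
    | succ n ih => rw [pow_succ, hmul, ih, pow_succ]
  have hainv : ∀ g, α g⁻¹ = (α g)⁻¹ := by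
    intro g
    apply eq_inv_of_mul_eq_one_left
    rw [← hmul, inv_mul_cancel, hone]
  have hαg : ∀ g : Gr m, α g = (α aa)^(g.fst.val) * (α bb)^(g.snd.val) := by
    intro g
    conv_lhs => rw [decomp g]
    rw [hmul, hpow, hpow]
  have e1 : ∀ g : Gr m, ((g.fst.val : ℕ) : ZMod 2) = c₁ g := fun g => (ψ2_apply g.fst).symm
  have e2 : ∀ g : Gr m, ((g.snd.val : ℕ) : ZMod 2) = c₂ g := fun g => (χ_apply g.snd).symm
  have hrev1 : ∀ g : Gr m, α g = g⁻¹ → c₁ g * c₁ (α aa) + c₂ g * c₁ (α bb) = c₁ g := by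
    intro g hg
    have h := congrArg c₁ hg
    rw [c₁_inv, hαg g, c₁_mul, c₁_pow, c₁_pow, e1, e2] at h
    exact h
  have hrev2 : ∀ g : Gr m, α g = g⁻¹ → c₁ g * c₂ (α aa) + c₂ g * c₂ (α bb) = c₂ g := by
    intro g hg
    have h := congrArg c₂ hg
    rw [c₂_inv, hαg g, c₂_mul, c₂_pow, c₂_pow, e1, e2] at h
    exact h
  have hIbullet : ∀ s t : ZMod 2, ∀ g : Gr m, g * g = 1 → s * c₁ g + t * c₂ g = 0 := by
    intro s t g hg
    obtain ⟨i0, v0⟩ := invol_c g hg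
    rw [i0, v0]
    ring
  by_cases hMI : c₁ (α aa) = 1 ∧ c₂ (α aa) = 0 ∧ c₁ (α bb) = 0 ∧ c₂ (α bb) = 1
  · -- the hard case: the induced map on parities is the identity
    obtain ⟨hx, hp, hy, hw⟩ := hMI
    have hxodd : (α aa).fst.val % 2 = 1 := cast2_eq_one ((e1 (α aa)).trans hx)
    have hyev : (α bb).fst.val % 2 = 0 := cast2_eq_zero ((e1 (α bb)).trans hy)
    have hpv : (α aa).snd = 0 ∨ (α aa).snd = 2 := by
      have h2 : (α aa).snd.val % 2 = 0 := cast2_eq_zero ((e2 (α aa)).trans hp)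
      have h3 : (α aa).snd.val < 4 := ZMod.val_lt _
      have h4 : (α aa).snd = (((α aa).snd.val : ℕ) : ZMod 4) := by
        rw [ZMod.natCast_val, ZMod.cast_id]
      have : (α aa).snd.val = 0 ∨ (α aa).snd.val = 2 := by omega
      rcases this with h'|h'
      · left; rw [h4, h']; rfl
      · right; rw [h4, h']; rfl
    have hwv : (α bb).snd = 1 ∨ (α bb).snd = 3 := by
      have h2 : (α bb).snd.val % 2 = 1 := cast2_eq_one ((e2 (α bb)).trans hw)
      have h3 : (α bb).snd.val < 4 := ZMod.val_lt _
      have h4 : (α bb).snd = (((α bb).snd.val : ℕ) : ZMod 4) := by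
        rw [ZMod.natCast_val, ZMod.cast_id]
      have : (α bb).snd.val = 1 ∨ (α bb).snd.val = 3 := by omega
      rcases this with h'|h'
      · left; rw [h4, h']; rfl
      · right; rw [h4, h']; rfl
    -- apply α to the relation
    have hrel := congrArg α (rel_id (m := m))
    rw [hmul, hmul, hmul, hainv, hainv, hpow] at hrel
    rw [comm_eq] at hrel
    -- compute (α aa) ^ (2^(m+2))
    have hAq : (α aa) ^ (2^(m+2))
        = ⟨((2^(m+2) :ℕ) : ZMod (2^(m+4))) * (α aa).fst, 0⟩ := by
      rcases hpv with hA0 | hA2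
      · have hAe : α aa = ⟨(α aa).fst, 0⟩ := by rw [← hA0]
        conv_lhs => rw [hAe]
        exact pow_p0 _ _
      · have h2 : (α aa)^2 = ⟨(α aa).fst + (α aa).fst + δ 2 * (α aa).fst, 0⟩ := by
          rw [pow_two, mul_def, hA2]
          ext
          · rfl
          · show (2:ZMod 4) + 2 = 0; decide
        have hsplit : (2:ℕ)^(m+2) = 2 * 2^(m+1) := by
          rw [show m+2 = (m+1)+1 by omega, pow_succ 2 (m+1)]; ring
        rw [hsplit, pow_mul, h2, pow_p0]
        have hnat : (2:ℕ)^(m+1) * (2^(m+2) * 2) = 2^(m+4) * 2^m := by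
          rw [show (2:ℕ)^(m+2) * 2 = 2^(m+3) from by
            rw [show m+3 = (m+2)+1 by omega, pow_succ 2 (m+2)]]
          rw [← pow_add, ← pow_add]
          congr 1
          omega
        have hδ2 : ((2^(m+1) : ℕ) : ZMod (2^(m+4))) * δ 2 = 0 := by
          rw [δ, show ((2:ZMod 4)).val = 2 from rfl, ← Nat.cast_mul, hnat,
            Nat.cast_mul, ZMod.natCast_self, zero_mul]
        have hcc : ((2^(m+1) : ℕ) : ZMod (2^(m+4))) * 2
            = ((2 * 2^(m+1) : ℕ) : ZMod (2^(m+4))) := by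
          push_cast
          ring
        ext
        · dsimp only
          linear_combination (α aa).fst * hδ2 + (α aa).fst * hcc
        · rfl
    rw [hAq] at hrel
    have hfst : δ (α bb).snd * (α aa).fst - δ (α aa).snd * (α bb).fst
        = ((2^(m+2):ℕ) : ZMod (2^(m+4))) * (α aa).fst := congrArg Gr.fst hrel
    have eδ1 : (δ (α bb).snd : ZMod (2^(m+4)))
        = ((2^(m+2):ℕ) : ZMod (2^(m+4))) * (((α bb).snd.val : ℕ) : ZMod (2^(m+4))) := by
      rw [δ, Nat.cast_mul]
    have eδ2 : (δ (α aa).snd : ZMod (2^(m+4)))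
        = ((2^(m+2):ℕ) : ZMod (2^(m+4))) * (((α aa).snd.val : ℕ) : ZMod (2^(m+4))) := by
      rw [δ, Nat.cast_mul]
    rw [eδ1, eδ2] at hfst
    have hq : ((2^(m+2):ℕ) : ZMod (2^(m+4))) *
        ((((α bb).snd.val : ℕ) : ZMod (2^(m+4))) * (α aa).fst
          - (((α aa).snd.val : ℕ) : ZMod (2^(m+4))) * (α bb).fst - (α aa).fst) = 0 := by
      linear_combination hfst
    have h4 := (q_mul_eq_zero_iff _).mp hq
    have hφ : φ4 ((((α bb).snd.val : ℕ) : ZMod (2^(m+4))) * (α aa).fst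
        - (((α aa).snd.val : ℕ) : ZMod (2^(m+4))) * (α bb).fst - (α aa).fst) = 0 := by
      rw [φ4_apply]
      exact h4
    rw [map_sub, map_sub, map_mul, map_mul, map_natCast, map_natCast] at hφ
    have hXv : φ4 (α aa).fst = 1 ∨ φ4 (α aa).fst = 3 := by
      rw [φ4_apply]; exact odd_cast4 hxodd
    have hYv : φ4 (α bb).fst = 0 ∨ φ4 (α bb).fst = 2 := by
      rw [φ4_apply]; exact even_cast4 hyev
    rw [show (((α bb).snd.val : ℕ) : ZMod 4) = (α bb).snd from by
        rw [ZMod.natCast_val, ZMod.cast_id],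
      show (((α aa).snd.val : ℕ) : ZMod 4) = (α aa).snd from by
        rw [ZMod.natCast_val, ZMod.cast_id]] at hφ
    have hw1 : (α bb).snd = 1 := by
      rcases hwv with hw'|hw' <;> rcases hpv with hp'|hp' <;> rcases hXv with hX'|hX' <;>
        rcases hYv with hY'|hY' <;> rw [hw', hp', hX', hY'] at hφ <;>
        first
          | exact hw'
          | exact absurd hφ (by decide)
    -- per-element equation on second coordinates
    have hsnd : ∀ g : Gr m, α g = g⁻¹ →
        ((g.fst.val : ℕ) : ZMod 4) * (α aa).snd + g.snd = -g.snd := by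
      intro g hg
      have h := congrArg Gr.snd hg
      rw [hαg g] at h
      rw [snd_inv] at h
      rw [show ((α aa ^ g.fst.val * α bb ^ g.snd.val).snd)
          = ((g.fst.val : ℕ) : ZMod 4) * (α aa).snd + ((g.snd.val : ℕ) : ZMod 4) * (α bb).snd
        from by rw [snd_mul, snd_pow, snd_pow]] at h
      rw [hw1, mul_one, show ((g.snd.val : ℕ) : ZMod 4) = g.snd from by
        rw [ZMod.natCast_val, ZMod.cast_id]] at h
      exact h
    rcases hpv with hA0 | hA2
    · refine ⟨0, 1, Or.inr one_ne_zero, hIbullet 0 1, ?_⟩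
      intro g hg
      have h := hsnd g hg
      rw [hA0, mul_zero, zero_add] at h
      have hv : g.snd = 0 ∨ g.snd = 2 := by
        have : ∀ v : ZMod 4, v = -v → v = 0 ∨ v = 2 := by decide
        exact this _ h
      have hc2 : c₂ g = 0 := by
        rcases hv with h'|h' <;> rw [c₂, h', χ_apply] <;> decide
      rw [hc2]
      ring
    · refine ⟨1, 1, Or.inl one_ne_zero, hIbullet 1 1, ?_⟩
      intro g hg
      have h := hsnd g hg
      rw [hA2] at h
      rw [show g.snd = ((g.snd.val : ℕ) : ZMod 4) from by
        rw [ZMod.natCast_val, ZMod.cast_id]] at h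
      have hnat : ((g.fst.val * 2 + g.snd.val + g.snd.val : ℕ) : ZMod 4) = 0 := by
        push_cast
        linear_combination h
      have hdvd := (ZMod.natCast_eq_zero_iff _ _).mp hnat
      have h2 : (2:ℕ) ∣ g.fst.val + g.snd.val := by omega
      have hz : ((g.fst.val + g.snd.val : ℕ) : ZMod 2) = 0 :=
        (ZMod.natCast_eq_zero_iff _ _).mpr h2
      have hc : c₁ g + c₂ g = 0 := by
        rw [← e1, ← e2, ← Nat.cast_add]
        exact hz
      linear_combination hc
  · -- easy case: the induced parity matrix is not the identity
    by_cases h1 : c₁ (α aa) = 1 ∧ c₁ (α bb) = 0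
    · refine ⟨c₂ (α aa), c₂ (α bb) + 1, ?_, hIbullet _ _, ?_⟩
      · have hne : ¬(c₂ (α aa) = 0 ∧ c₂ (α bb) = 1) := fun hc => hMI ⟨h1.1, hc.1, h1.2, hc.2⟩
        rcases zmod2_cases (c₂ (α aa)) with hp | hp
        · right
          rcases zmod2_cases (c₂ (α bb)) with hw | hw
          · rw [hw]; decide
          · exact absurd ⟨hp, hw⟩ hne
        · left; rw [hp]; exact one_ne_zero
      · intro g hg
        have h := hrev2 g hg
        linear_combination h + c₂ g * two_zmod2
    · refine ⟨c₁ (α aa) + 1, c₁ (α bb), ?_, hIbullet _ _, ?_⟩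
      · rcases zmod2_cases (c₁ (α aa)) with hx | hx
        · left; rw [hx]; decide
        · right; exact fun hy => h1 ⟨hx, hy⟩
      · intro g hg
        have h := hrev1 g hg
        linear_combination h + c₁ g * two_zmod2


lemma c₁_aa : c₁ (aa : Gr m) = 1 := by
  rw [c₁, ψ2_apply, show ((aa : Gr m).fst.val) = 1 from by
    rw [aa, ZMod.val_one_eq_one_mod]
    exact Nat.mod_eq_of_lt (by have := Nat.one_lt_two_pow (n := m+4) (by omega); omega)]
  exact Nat.cast_one

lemma c₂_aa : c₂ (aa : Gr m) = 0 := by rw [c₂, χ_apply]; rfl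
lemma c₁_bb : c₁ (bb : Gr m) = 0 := by
  rw [c₁, ψ2_apply, show (bb : Gr m).fst = 0 from rfl, ZMod.val_zero]
  exact Nat.cast_zero
lemma c₂_bb : c₂ (bb : Gr m) = 1 := by rw [c₂, χ_apply]; rfl

lemma card_Gr (m : ℕ) : Nat.card (Gr m) = 2^(m+6) := by
  rw [Nat.card_congr (grEquiv m), Nat.card_prod, Nat.card_zmod, Nat.card_zmod,
    show m+6 = (m+4)+2 by omega, pow_add 2 (m+4) 2]
  norm_num

/-- The main counterexample property: `Gr m` does not satisfy (*). -/
lemma not_star (m : ℕ) :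
    ¬ (∃ (Γ : Type) (_ : Group Γ) (f : Gr m →* Γ),
      Function.Injective f ∧ f.range.index = 2 ∧
      Subgroup.closure {x : Γ | orderOf x = 2} = ⊤) := by
  rintro ⟨Γ, iΓ, f, hinj, hidx, hclos⟩
  -- there is an involution outside the range
  have hNtop : f.range ≠ ⊤ := by
    intro h
    rw [h, Subgroup.index_top] at hidx
    exact absurd hidx (by norm_num)
  obtain ⟨t, hordt, htN⟩ : ∃ t : Γ, orderOf t = 2 ∧ t ∉ f.range := by
    by_contra h
    push_neg at h
    have hle : Subgroup.closure {x : Γ | orderOf x = 2} ≤ f.range :=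
      (Subgroup.closure_le _).mpr (fun x hx => h x hx)
    rw [hclos] at hle
    exact hNtop (top_le_iff.mp hle)
  have ht2 : t * t = 1 := by
    have h := pow_orderOf_eq_one t
    rwa [hordt, pow_two] at h
  have hts : ∀ x : Γ, t * (t * x) = x := by
    intro x
    rw [← mul_assoc, ht2, one_mul]
  -- conjugation by t maps the range into itself
  have hconj : ∀ g : Gr m, t * f g * t ∈ f.range := by
    intro g
    have h1 : t * f g ∉ f.range := by
      intro h
      have := (Subgroup.mul_mem_iff_of_index_two hidx).mp h
      exact htN (this.mpr ⟨g, rfl⟩)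
    exact (Subgroup.mul_mem_iff_of_index_two hidx).mpr (iff_of_false h1 htN)
  choose αf hαf using fun g => MonoidHom.mem_range.mp (hconj g)
  -- αf is multiplicative
  have hαmul : ∀ g h : Gr m, αf (g * h) = αf g * αf h := by
    intro g h
    apply hinj
    rw [map_mul, hαf, hαf, hαf, map_mul]
    simp only [mul_assoc, hts]
  have hαα : ∀ g : Gr m, αf (αf g) = g := by
    intro g
    apply hinj
    rw [hαf, hαf]
    simp only [mul_assoc, hts]
    rw [ht2, mul_one]
  have hαinv : ∀ g : Gr m, αf g⁻¹ = (αf g)⁻¹ := by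
    intro g
    apply hinj
    rw [hαf, map_inv, map_inv, hαf]
    rw [mul_inv_rev, mul_inv_rev]
    have htinv : t⁻¹ = t := inv_eq_of_mul_eq_one_right ht2
    rw [htinv, mul_assoc]
  have hswap : ∀ g : Gr m, t * f g = f (αf g) * t := by
    intro g
    rw [hαf]
    simp only [mul_assoc, ht2, mul_one]
  -- get the proper subgroup data from the key lemma
  obtain ⟨s, t', hnz, hI, hR⟩ := key αf hαmul
  let P : Subgroup (Gr m) :=
    { carrier := {g | s * c₁ g + t' * c₂ g = 0}
      one_mem' := by
        show s * c₁ (1 : Gr m) + t' * c₂ (1 : Gr m) = 0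
        rw [c₁_one, c₂_one]; ring
      mul_mem' := by
        intro g h hg hh
        show s * c₁ (g*h) + t' * c₂ (g*h) = 0
        rw [c₁_mul, c₂_mul]
        have hg' : s * c₁ g + t' * c₂ g = 0 := hg
        have hh' : s * c₁ h + t' * c₂ h = 0 := hh
        linear_combination hg' + hh'
      inv_mem' := by
        intro g hg
        show s * c₁ g⁻¹ + t' * c₂ g⁻¹ = 0
        rw [c₁_inv, c₂_inv]
        exact hg }
  set S : Set (Gr m) := {g | g * g = 1} ∪ {g | αf g = g⁻¹} with hS
  set H := Subgroup.closure S with hH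
  have hHP : H ≤ P := by
    apply (Subgroup.closure_le _).mpr
    rintro g (hg | hg)
    · exact hI g hg
    · exact hR g hg
  have hα1 : αf 1 = 1 := by
    apply hinj
    rw [hαf, map_one, mul_one, ht2]
  have hSα : ∀ g ∈ S, αf g ∈ S := by
    rintro g (hg | hg)
    · left
      show αf g * αf g = 1
      rw [← hαmul, hg, hα1]
    · right
      show αf (αf g) = (αf g)⁻¹
      rw [hαα, hg, inv_inv]
  have hHα : ∀ h ∈ H, αf h ∈ H := by
    intro h hh
    refine Subgroup.closure_induction ?_ ?_ ?_ ?_ hh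
    · intro x hx
      exact Subgroup.subset_closure (hSα x hx)
    · rw [hα1]; exact one_mem H
    · intro x y hx hy hx' hy'
      rw [hαmul]; exact mul_mem hx' hy'
    · intro x hx hx'
      rw [hαinv]; exact inv_mem hx'
  -- the subgroup Q of Γ
  let Q : Subgroup Γ :=
    { carrier := {y | ∃ h ∈ H, y = f h ∨ y = f h * t}
      one_mem' := ⟨1, one_mem H, Or.inl (map_one f).symm⟩
      mul_mem' := by
        rintro y z ⟨h1, hh1, (rfl | rfl)⟩ ⟨h2, hh2, (rfl | rfl)⟩
        · exact ⟨h1 * h2, mul_mem hh1 hh2, Or.inl (map_mul f _ _).symm⟩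
        · refine ⟨h1 * h2, mul_mem hh1 hh2, Or.inr ?_⟩
          rw [map_mul, mul_assoc]
        · refine ⟨h1 * αf h2, mul_mem hh1 (hHα _ hh2), Or.inr ?_⟩
          calc f h1 * t * f h2 = f h1 * (t * f h2) := by rw [mul_assoc]
            _ = f h1 * (f (αf h2) * t) := by rw [hswap]
            _ = f h1 * f (αf h2) * t := by rw [mul_assoc]
            _ = f (h1 * αf h2) * t := by rw [map_mul]
        · refine ⟨h1 * αf h2, mul_mem hh1 (hHα _ hh2), Or.inl ?_⟩
          rw [map_mul]
          calc f h1 * t * (f h2 * t) = f h1 * (t * f h2 * t) := by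
                simp only [mul_assoc]
            _ = f h1 * f (αf h2) := by rw [← hαf]
      inv_mem' := by
        rintro y ⟨h, hh, (rfl | rfl)⟩
        · exact ⟨h⁻¹, inv_mem hh, Or.inl (map_inv f h).symm⟩
        · refine ⟨αf h⁻¹, hHα _ (inv_mem hh), Or.inr ?_⟩
          have htinv : t⁻¹ = t := inv_eq_of_mul_eq_one_right ht2
          calc (f h * t)⁻¹ = t⁻¹ * (f h)⁻¹ := by rw [mul_inv_rev]
            _ = t * f h⁻¹ := by rw [htinv, ← map_inv]
            _ = f (αf h⁻¹) * t := hswap _ }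
  -- every involution of Γ lies in Q
  have hIQ : ∀ x : Γ, orderOf x = 2 → x ∈ Q := by
    intro x hx
    have hx2 : x * x = 1 := by
      have h := pow_orderOf_eq_one x
      rwa [hx, pow_two] at h
    by_cases hxN : x ∈ f.range
    · obtain ⟨g, rfl⟩ := MonoidHom.mem_range.mp hxN
      have hg : g * g = 1 := hinj (by rw [map_mul, hx2, map_one])
      exact ⟨g, Subgroup.subset_closure (Or.inl hg), Or.inl rfl⟩
    · have hxtN : x * t ∈ f.range :=
        (Subgroup.mul_mem_iff_of_index_two hidx).mpr (iff_of_false hxN htN)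
      obtain ⟨g, hg⟩ := MonoidHom.mem_range.mp hxtN
      have hxg : x = f g * t := by
        rw [hg, mul_assoc, ht2, mul_one]
      have hrev : αf g = g⁻¹ := by
        apply hinj
        rw [hαf, map_inv]
        have : f g * (t * f g * t) = 1 := by
          calc f g * (t * f g * t) = (f g * t) * (f g * t) := by simp only [mul_assoc]
            _ = x * x := by rw [← hxg]
            _ = 1 := hx2
        exact (inv_eq_of_mul_eq_one_right this).symm
      exact ⟨g, Subgroup.subset_closure (Or.inr hrev), Or.inr hxg⟩
  have hQtop : ∀ y : Γ, y ∈ Q := by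
    have hle : Subgroup.closure {x : Γ | orderOf x = 2} ≤ Q :=
      (Subgroup.closure_le _).mpr (fun x hx => hIQ x hx)
    rw [hclos] at hle
    exact fun y => hle trivial
  -- produce an element outside P, hence outside H, contradiction
  have hg₀ : ∃ g₀ : Gr m, g₀ ∉ P := by
    rcases hnz with hs | ht'
    · refine ⟨aa, ?_⟩
      show ¬(s * c₁ (aa : Gr m) + t' * c₂ (aa : Gr m) = 0)
      rw [c₁_aa, c₂_aa, mul_one, mul_zero, add_zero]
      exact hs
    · refine ⟨bb, ?_⟩
      show ¬(s * c₁ (bb : Gr m) + t' * c₂ (bb : Gr m) = 0)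
      rw [c₁_bb, c₂_bb, mul_one, mul_zero, zero_add]
      exact ht'
  obtain ⟨g₀, hg₀P⟩ := hg₀
  obtain ⟨h, hh, hcase⟩ := hQtop (f g₀)
  rcases hcase with hcase | hcase
  · exact hg₀P (hHP (hinj hcase ▸ hh))
  · apply htN
    refine ⟨h⁻¹ * g₀, ?_⟩
    rw [map_mul, map_inv, hcase, ← mul_assoc, inv_mul_cancel, one_mul]
  
end Cex

/-- There exist infinitely many pairwise non-isomorphic finite 2-groups
failing property (*). -/
theorem infinitely_many_counterexamples :
    ∃ (G : ℕ → Type) (inst : ∀ i, Group (G i)),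
      (∀ i, Finite (G i)) ∧
      (∀ i, ∃ k, Nat.card (G i) = 2 ^ k) ∧
      (∀ i, ¬ @SatisfiesStar (G i) (inst i)) ∧
      (∀ i j, i ≠ j → @NonIsomorphic (G i) (G j) (inst i) (inst j)) := by
  refine ⟨fun i => Cex.Gr i, fun i => inferInstance, fun i => inferInstance, ?_, ?_, ?_⟩
  · intro i
    exact ⟨i + 6, Cex.card_Gr i⟩
  · intro i
    exact Cex.not_star i
  · intro i j hij
    refine ⟨fun e => hij ?_⟩
    have hc : Nat.card (Cex.Gr i) = Nat.card (Cex.Gr j) := Nat.card_congr e.toEquiv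
    rw [Cex.card_Gr, Cex.card_Gr] at hc
    have := Nat.pow_right_injective (le_refl 2) hc
    omega
end

section
/- Let G be a finite 2-group and N a characteristic subgroup of G. If the quotient G/N does not satisfy property (*), then G does not satisfy property (*). -/
/-! If `G` has index 2 in a group `Γ` generated by involutions, it is normal in `Γ`, so
conjugation by elements of `Γ` restricts to automorphisms of `G`. These preserve the
characteristic subgroup `N`, which is therefore normal in `Γ`. Then `G ⧸ N` has index 2 in
`Γ ⧸ N`, and `Γ ⧸ N` is generated by the images of the involutions of `Γ`, each of which is
trivial or again an involution. -/

namespace Subgroup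

variable {G H : Type*} [Group G] [Group H]

theorem Characteristic.map_mulEquiv (N : Subgroup G) [hN : N.Characteristic] (e : G ≃* H) :
    (N.map e.toMonoidHom).Characteristic := by
  refine characteristic_iff_map_eq.mpr fun ϕ => ?_
  conv_rhs => rw [← characteristic_iff_map_eq.mp hN ((e.trans ϕ).trans e.symm)]
  rw [map_map, map_map]
  congr 1
  ext x
  simp

theorem map_normal_of_characteristic {f : G →* H} (hf : Function.Injective f) [f.range.Normal]
    (N : Subgroup G) [N.Characteristic] : (N.map f).Normal := by
  have := Characteristic.map_mulEquiv N (MonoidHom.ofInjective hf)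
  have hmap : (N.map (MonoidHom.ofInjective hf).toMonoidHom).map f.range.subtype = N.map f := by
    rw [map_map]; rfl
  rw [← hmap]
  infer_instance

theorem closure_orderOf_eq_two_eq_top_of_surjective {f : G →* H} (hf : Function.Surjective f)
    (h : closure {x : G | orderOf x = 2} = ⊤) : closure {y : H | orderOf y = 2} = ⊤ := by
  rw [eq_top_iff, ← map_top_of_surjective f hf, ← h, MonoidHom.map_closure, closure_le]
  rintro _ ⟨x, hx, rfl⟩
  rcases (Nat.dvd_prime Nat.prime_two).mp (hx ▸ orderOf_map_dvd f x) with h1 | h2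
  · rw [orderOf_eq_one_iff.mp h1]
    exact one_mem _
  · exact subset_closure h2

end Subgroup

namespace QuotientGroup

variable {G H : Type*} [Group G] [Group H]

theorem map_injective_of_injective {f : G →* H} (hf : Function.Injective f)
    (N : Subgroup G) [N.Normal] [(N.map f).Normal] :
    Function.Injective (map N (N.map f) f (Subgroup.le_comap_map f N)) := by
  rw [← MonoidHom.ker_eq_bot_iff, ker_map, Subgroup.comap_map_eq_self_of_injective hf,
    map_mk'_self]

theorem range_map (f : G →* H) (N : Subgroup G) [N.Normal] (M : Subgroup H) [M.Normal]
    (h : N ≤ M.comap f) : (map N M f h).range = f.range.map (mk' M) := by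
  have hcomp : (map N M f h).comp (mk' N) = (mk' M).comp f := rfl
  rw [← MonoidHom.range_comp, ← hcomp, MonoidHom.range_comp, (MonoidHom.range_eq_top).mpr
    (mk'_surjective N), ← MonoidHom.range_eq_map]

end QuotientGroup

theorem satisfiesStar_quotient_of_map_normal {G : Type*} {Γ : Type} [Group G] [Group Γ]
    {f : G →* Γ} (hf : Function.Injective f) (hidx : f.range.index = 2)
    (hgen : Subgroup.closure {x : Γ | orderOf x = 2} = ⊤) (N : Subgroup G) [N.Normal]
    [(N.map f).Normal] : SatisfiesStar (G ⧸ N) := by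
  refine ⟨Γ ⧸ N.map f, inferInstance, _, QuotientGroup.map_injective_of_injective hf N, ?_,
    Subgroup.closure_orderOf_eq_two_eq_top_of_surjective (QuotientGroup.mk'_surjective _) hgen⟩
  rw [QuotientGroup.range_map, Subgroup.index_map_eq _ (QuotientGroup.mk'_surjective _)
    ((QuotientGroup.ker_mk' _).trans_le (Subgroup.map_le_range f N)), hidx]

theorem not_satisfiesStar_of_quotient_general (G : Type*) [Group G]
    (N : Subgroup G) [N.Characteristic]
    (h : ¬ SatisfiesStar (G ⧸ N)) : ¬ SatisfiesStar G := by
  rintro ⟨Γ, _, f, hf, hidx, hgen⟩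
  have := Subgroup.normal_of_index_eq_two hidx
  have := Subgroup.map_normal_of_characteristic hf N
  exact h (satisfiesStar_quotient_of_map_normal hf hidx hgen N)

/-- If `G` is a finite 2-group and `N` is a characteristic subgroup such that
`G/N` fails property (*), then `G` fails property (*). -/
theorem not_satisfiesStar_of_quotient (G : Type*) [Group G] [Finite G]
    (hcard : ∃ k, Nat.card G = 2 ^ k) (N : Subgroup G) [N.Characteristic]
    (h : ¬ SatisfiesStar (G ⧸ N)) : ¬ SatisfiesStar G :=
  not_satisfiesStar_of_quotient_general G N h
end

section
/- For all powers of two m and n with m ≥ 16, n ≥ 4, and m ≤ 4n, the group G(m,n) has order m·n. -/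
/-- The relators of the presentation `⟨a, b | a^m, b^n, [b,a] = a^4⟩`, where `a` is
`FreeGroup.of true`, `b` is `FreeGroup.of false`, and `[b,a] = b⁻¹a⁻¹ba`. -/
def GRels (m n : ℕ) : Set (FreeGroup Bool) :=
  { FreeGroup.of true ^ m,
    FreeGroup.of false ^ n,
    (FreeGroup.of false)⁻¹ * (FreeGroup.of true)⁻¹ * FreeGroup.of false *
      FreeGroup.of true * (FreeGroup.of true ^ 4)⁻¹ }

/-- The group `G(m, n) = ⟨a, b | a^m, b^n, [b,a] = a^4⟩`. -/
abbrev Gmn (m n : ℕ) : Type := PresentedGroup (GRels m n)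

/-- The image of the generator `a` in `G(m, n)`. -/
def gen_a (m n : ℕ) : Gmn m n := PresentedGroup.of true

/-- The image of the generator `b` in `G(m, n)`. -/
def gen_b (m n : ℕ) : Gmn m n := PresentedGroup.of false

/-! The relation `[b,a] = a⁴` says `b⁻¹ a b = a⁻³`, so `⟨a⟩` is normal and every element is
`bʲ aᵏ`, giving `|G(m,n)| ≤ m n`. Conversely `G(m,n)` maps onto `ℤ/m ⋊ ℤ/n`, where the generator of
`ℤ/n` acts as multiplication by `(-3)⁻¹`; this requires `(-3)ⁿ = 1` in `ℤ/m`, which holds because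
`2ʲ⁺² ∣ (-3)^(2ʲ) - 1` (by repeated squaring) and `m ∣ 4n = 2ʲ⁺²`. -/

open Subgroup Multiplicative SemidirectProduct
open scoped Pointwise

section Metacyclic

variable {G : Type*} [Group G] {a b g : G}

theorem conj_mem_zpowers_of_mem {h : G} (hg : g * a * g⁻¹ ∈ zpowers a) (hh : h ∈ zpowers a) :
    g * h * g⁻¹ ∈ zpowers a := by
  obtain ⟨k, rfl⟩ := hh
  simpa only [conj_zpow] using zpow_mem hg k

theorem mem_normalizer_zpowers (h₁ : g * a * g⁻¹ ∈ zpowers a) (h₂ : g⁻¹ * a * g ∈ zpowers a) :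
    g ∈ normalizer (zpowers a : Set G) := by
  refine mem_normalizer_iff.mpr fun h ↦ ⟨conj_mem_zpowers_of_mem h₁, fun hh ↦ ?_⟩
  have := conj_mem_zpowers_of_mem (g := g⁻¹) (by rwa [inv_inv]) hh
  simpa only [inv_inv, mul_assoc, inv_mul_cancel_left, inv_mul_cancel, mul_one] using this

theorem inv_pow_mul_mul_pow_mem_zpowers (h : b⁻¹ * a * b ∈ zpowers a) (j : ℕ) :
    (b ^ j)⁻¹ * a * b ^ j ∈ zpowers a := by
  induction j with
  | zero => simp [mem_zpowers a]
  | succ j ih =>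
    have := conj_mem_zpowers_of_mem (g := b⁻¹) (by rwa [inv_inv]) ih
    simpa only [pow_succ, mul_inv_rev, inv_inv, mul_assoc] using this

theorem conj_mem_zpowers_of_pow_eq_one {n : ℕ} (h : b⁻¹ * a * b ∈ zpowers a) (hb : b ^ n = 1)
    (hn : n ≠ 0) : b * a * b⁻¹ ∈ zpowers a := by
  have hb' : b⁻¹ = b ^ (n - 1) := inv_eq_of_mul_eq_one_right <| by
    rw [← pow_succ', Nat.sub_add_cancel (Nat.one_le_iff_ne_zero.mpr hn), hb]
  simpa only [← hb', inv_inv] using inv_pow_mul_mul_pow_mem_zpowers h (n - 1)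

theorem normal_zpowers_of_closure_pair_eq_top {n : ℕ} (hG : closure {a, b} = ⊤)
    (h : b⁻¹ * a * b ∈ zpowers a) (hb : b ^ n = 1) (hn : n ≠ 0) : (zpowers a).Normal := by
  rw [← normalizer_eq_top_iff, eq_top_iff, ← hG, closure_le]
  rintro g (rfl | rfl)
  · exact le_normalizer (mem_zpowers g)
  · exact mem_normalizer_zpowers (conj_mem_zpowers_of_pow_eq_one h hb hn) h

theorem zpowers_mul_zpowers_eq_univ {n : ℕ} (hG : closure {a, b} = ⊤)
    (h : b⁻¹ * a * b ∈ zpowers a) (hb : b ^ n = 1) (hn : n ≠ 0) :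
    (zpowers b : Set G) * (zpowers a : Set G) = Set.univ := by
  have := normal_zpowers_of_closure_pair_eq_top hG h hb hn
  rw [← mul_normal, zpowers_eq_closure, zpowers_eq_closure, ← Subgroup.closure_union,
    Set.singleton_union, Set.pair_comm, hG, coe_top]

theorem card_le_of_zpowers_mul_zpowers_eq_univ
    (hmul : (zpowers b : Set G) * (zpowers a : Set G) = Set.univ) :
    Nat.card G ≤ orderOf a * orderOf b := by
  calc Nat.card G = Nat.card ((zpowers b : Set G) * (zpowers a : Set G)) := by
        rw [hmul, Nat.card_univ]
    _ ≤ Nat.card (zpowers b) * Nat.card (zpowers a) := Set.natCard_mul_le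
    _ = orderOf a * orderOf b := by rw [Nat.card_zpowers, Nat.card_zpowers, Nat.mul_comm]

theorem finite_of_zpowers_mul_zpowers_eq_univ
    (hmul : (zpowers b : Set G) * (zpowers a : Set G) = Set.univ) (ha : IsOfFinOrder a)
    (hb : IsOfFinOrder b) : Finite G :=
  Set.finite_univ_iff.mp <| hmul ▸ (finite_zpowers.mpr hb).mul (finite_zpowers.mpr ha)

end Metacyclic

theorem two_pow_add_dvd_pow_two_pow_sub_one {R : Type*} [CommRing R] {x : R} {k : ℕ}
    (hk : k ≠ 0) (h : 2 ^ k ∣ x - 1) (j : ℕ) : 2 ^ (k + j) ∣ x ^ 2 ^ j - 1 := by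
  induction j with
  | zero => simpa using h
  | succ j ih =>
    have h2 : (2 : R) ∣ x ^ 2 ^ j - 1 + 2 :=
      dvd_add ((dvd_pow_self 2 (by omega)).trans ih) dvd_rfl
    calc (2 : R) ^ (k + (j + 1)) = 2 ^ (k + j) * 2 := by ring
      _ ∣ (x ^ 2 ^ j - 1) * (x ^ 2 ^ j - 1 + 2) := mul_dvd_mul ih h2
      _ = x ^ 2 ^ (j + 1) - 1 := by ring

theorem ZMod.neg_three_pow_two_pow_eq_one {i j : ℕ} (hij : i ≤ j + 2) :
    (-3 : ZMod (2 ^ i)) ^ 2 ^ j = 1 := by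
  have hdvd := two_pow_add_dvd_pow_two_pow_sub_one (x := (-3 : ZMod (2 ^ i))) two_ne_zero
    ⟨-1, by norm_num⟩ j
  have hzero : (2 : ZMod (2 ^ i)) ^ (2 + j) = 0 := by
    exact_mod_cast (ZMod.natCast_eq_zero_iff _ _).mpr (Nat.pow_dvd_pow 2 (by omega))
  rwa [hzero, zero_dvd_iff, sub_eq_zero] at hdvd

section ZModAction

variable {m n : ℕ}

def zmodPowersHom {G : Type*} [Group G] {g : G} (hg : g ^ n = 1) : Multiplicative (ZMod n) →* G :=
  AddMonoidHom.toMultiplicativeLeft <|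
    ZMod.lift n ⟨zmultiplesHom _ (Additive.ofMul g), by simp [← ofMul_pow, hg]⟩

theorem zmodPowersHom_ofAdd_one {G : Type*} [Group G] {g : G} (hg : g ^ n = 1) :
    zmodPowersHom hg (ofAdd 1) = g := by
  simp only [zmodPowersHom, AddMonoidHom.toMultiplicativeLeft_apply_apply, toAdd_ofAdd]
  rw [← Int.cast_one, ZMod.lift_coe]
  simp

variable (u : (ZMod m)ˣ) (hu : u ^ n = 1)

def metacyclicAction : Multiplicative (ZMod n) →* MulAut (Multiplicative (ZMod m)) :=
  (MulAutMultiplicative (ZMod m)).symm.toMonoidHom.comp (AddAut.mulLeft.comp (zmodPowersHom hu))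

theorem metacyclicAction_ofAdd_one_symm_apply (x : ZMod m) :
    (metacyclicAction u hu (ofAdd 1)).symm (ofAdd x) = ofAdd (↑u⁻¹ * x) := by
  simp only [metacyclicAction, MonoidHom.comp_apply, zmodPowersHom_ofAdd_one]
  exact MulAutMultiplicative_symm_apply_symm_apply _ (AddAut.mulLeft u) (ofAdd x)

abbrev MetacyclicGroup : Type :=
  Multiplicative (ZMod m) ⋊[metacyclicAction u hu] Multiplicative (ZMod n)

namespace MetacyclicGroup

theorem inr_inv_mul_inl_mul_inr (x : ZMod m) :
    (inr (ofAdd 1) : MetacyclicGroup u hu)⁻¹ * inl (ofAdd x) * inr (ofAdd 1) =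
      inl (ofAdd (↑u⁻¹ * x)) := by
  rw [← map_inv, ← inl_aut_inv]
  exact congrArg inl (metacyclicAction_ofAdd_one_symm_apply u hu x)

theorem closure_inl_inr :
    closure {inl (ofAdd 1), inr (ofAdd 1)} = (⊤ : Subgroup (MetacyclicGroup u hu)) := by
  have hgen : ∀ {k : ℕ} (x : Multiplicative (ZMod k)), ∃ z : ℤ, x = ofAdd 1 ^ z := fun x ↦ by
    obtain ⟨z, hz⟩ := ZMod.intCast_surjective x.toAdd
    exact ⟨z, by rw [← ofAdd_zsmul, zsmul_one, hz, ofAdd_toAdd]⟩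
  refine eq_top_iff.mpr fun g _ ↦ ?_
  obtain ⟨z, hz⟩ := hgen g.left
  obtain ⟨w, hw⟩ := hgen g.right
  rw [← inl_left_mul_inr_right g, hz, hw, map_zpow, map_zpow]
  exact mul_mem (zpow_mem (subset_closure (by simp)) _) (zpow_mem (subset_closure (by simp)) _)

theorem inl_ofAdd_one_pow : (inl (ofAdd 1) : MetacyclicGroup u hu) ^ m = 1 := by
  rw [← map_pow, ← ofAdd_nsmul, nsmul_one, ZMod.natCast_self, ofAdd_zero, map_one]

theorem inr_ofAdd_one_pow : (inr (ofAdd 1) : MetacyclicGroup u hu) ^ n = 1 := by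
  rw [← map_pow, ← ofAdd_nsmul, nsmul_one, ZMod.natCast_self, ofAdd_zero, map_one]

theorem card : Nat.card (MetacyclicGroup u hu) = m * n := by
  simp [SemidirectProduct.card, Nat.card_congr Multiplicative.toAdd]

end MetacyclicGroup

end ZModAction

namespace Gmn

variable {m n : ℕ}

theorem relator_eq_one_iff {G : Type*} [Group G] {a b : G} :
    b⁻¹ * a⁻¹ * b * a * (a ^ 4)⁻¹ = 1 ↔ b⁻¹ * a * b = a ^ (-3 : ℤ) := by
  have : b⁻¹ * a⁻¹ * b * a * (a ^ 4)⁻¹ = (b⁻¹ * a * b)⁻¹ * a ^ (-3 : ℤ) := by group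
  rw [this, inv_mul_eq_one]

theorem mk_of_true : PresentedGroup.mk (GRels m n) (FreeGroup.of true) = gen_a m n := rfl

theorem mk_of_false : PresentedGroup.mk (GRels m n) (FreeGroup.of false) = gen_b m n := rfl

theorem gen_a_pow : gen_a m n ^ m = 1 := by
  simpa [mk_of_true] using PresentedGroup.one_of_mem (rels := GRels m n) (Set.mem_insert _ _)

theorem gen_b_pow : gen_b m n ^ n = 1 := by
  simpa [mk_of_false] using PresentedGroup.one_of_mem (rels := GRels m n)
    (Set.mem_insert_of_mem _ (Set.mem_insert _ _))

theorem gen_b_inv_mul_gen_a_mul_gen_b :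
    (gen_b m n)⁻¹ * gen_a m n * gen_b m n = gen_a m n ^ (-3 : ℤ) :=
  relator_eq_one_iff.mp <| by
    simpa [mk_of_true, mk_of_false] using PresentedGroup.one_of_mem (rels := GRels m n)
      (Set.mem_insert_of_mem _ (Set.mem_insert_of_mem _ rfl))

theorem closure_gen_a_gen_b : closure {gen_a m n, gen_b m n} = ⊤ := by
  rw [← PresentedGroup.closure_range_of, Set.pair_comm]
  congr
  simp [gen_a, gen_b]

section Lift

variable {H : Type*} [Group H] {x y : H} (hx : x ^ m = 1) (hy : y ^ n = 1)
  (hxy : y⁻¹ * x * y = x ^ (-3 : ℤ))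

def lift : Gmn m n →* H :=
  PresentedGroup.toGroup (f := fun t ↦ bif t then x else y) <| by
    rintro r (rfl | rfl | rfl)
    · simpa using hx
    · simpa using hy
    · simpa using relator_eq_one_iff.mpr hxy

theorem lift_gen_a : lift hx hy hxy (gen_a m n) = x := PresentedGroup.toGroup.of _

theorem lift_gen_b : lift hx hy hxy (gen_b m n) = y := PresentedGroup.toGroup.of _

end Lift

theorem zpowers_gen_b_mul_zpowers_gen_a (hn : n ≠ 0) :
    (zpowers (gen_b m n) : Set (Gmn m n)) * (zpowers (gen_a m n) : Set (Gmn m n)) = Set.univ :=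
  zpowers_mul_zpowers_eq_univ closure_gen_a_gen_b
    (gen_b_inv_mul_gen_a_mul_gen_b ▸ zpow_mem (mem_zpowers _) _) gen_b_pow hn

theorem card_le (hm : m ≠ 0) (hn : n ≠ 0) : Nat.card (Gmn m n) ≤ m * n :=
  (card_le_of_zpowers_mul_zpowers_eq_univ (zpowers_gen_b_mul_zpowers_gen_a hn)).trans <|
    Nat.mul_le_mul (orderOf_le_of_pow_eq_one (Nat.pos_of_ne_zero hm) gen_a_pow)
      (orderOf_le_of_pow_eq_one (Nat.pos_of_ne_zero hn) gen_b_pow)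

theorem finite (hm : m ≠ 0) (hn : n ≠ 0) : Finite (Gmn m n) :=
  finite_of_zpowers_mul_zpowers_eq_univ (zpowers_gen_b_mul_zpowers_gen_a hn)
    (isOfFinOrder_iff_pow_eq_one.mpr ⟨m, Nat.pos_of_ne_zero hm, gen_a_pow⟩)
    (isOfFinOrder_iff_pow_eq_one.mpr ⟨n, Nat.pos_of_ne_zero hn, gen_b_pow⟩)

theorem le_card (hm : m ≠ 0) (hn : n ≠ 0) (h : (-3 : ZMod m) ^ n = 1) :
    m * n ≤ Nat.card (Gmn m n) := by
  set u := (Units.ofPowEqOne _ n h hn)⁻¹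
  have hu : u ^ n = 1 := by simp [u]
  have hxy : (inr (ofAdd 1) : MetacyclicGroup u hu)⁻¹ * inl (ofAdd 1) * inr (ofAdd 1) =
      inl (ofAdd 1) ^ (-3 : ℤ) := by
    rw [MetacyclicGroup.inr_inv_mul_inl_mul_inr, ← map_zpow, ← ofAdd_zsmul]
    simp [u]
  set f := lift (MetacyclicGroup.inl_ofAdd_one_pow u hu) (MetacyclicGroup.inr_ofAdd_one_pow u hu)
    hxy
  have hf : Function.Surjective f := by
    rw [← MonoidHom.range_eq_top, eq_top_iff, ← MetacyclicGroup.closure_inl_inr, closure_le]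
    rintro _ (rfl | rfl)
    exacts [⟨gen_a m n, lift_gen_a ..⟩, ⟨gen_b m n, lift_gen_b ..⟩]
  have := finite hm hn
  calc m * n = Nat.card (MetacyclicGroup u hu) := (MetacyclicGroup.card u hu).symm
    _ ≤ Nat.card (Gmn m n) := Nat.card_le_card_of_surjective f hf

theorem card_eq (hm : m ≠ 0) (hn : n ≠ 0) (h : (-3 : ZMod m) ^ n = 1) :
    Nat.card (Gmn m n) = m * n :=
  le_antisymm (card_le hm hn) (le_card hm hn h)

end Gmn

theorem Gmn_card_general (m n : ℕ) (hm : ∃ i, m = 2 ^ i) (hn : ∃ j, n = 2 ^ j)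
    (hmn : m ≤ 4 * n) : Nat.card (Gmn m n) = m * n := by
  obtain ⟨i, rfl⟩ := hm
  obtain ⟨j, rfl⟩ := hn
  have hij : i ≤ j + 2 := (Nat.pow_le_pow_iff_right one_lt_two).mp (by rw [pow_add]; omega)
  exact Gmn.card_eq (by positivity) (by positivity) (ZMod.neg_three_pow_two_pow_eq_one hij)

/-- The group `G(m, n)` has order `m * n`. -/
theorem Gmn_card (m n : ℕ) (hm : ∃ i, m = 2 ^ i) (hn : ∃ j, n = 2 ^ j)
    (hm16 : 16 ≤ m) (hn4 : 4 ≤ n) (hmn : m ≤ 4 * n) :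
    Nat.card (Gmn m n) = m * n :=
  Gmn_card_general m n hm hn hmn
end

section
/- For all powers of two m and n with m ≥ 16, n ≥ 4, and m ≤ 4n, the derived (commutator) subgroup of G(m,n) equals the subgroup generated by a^4, and this subgroup is cyclic of order m/4. -/
/-!
Conjugation by `b` sends `a` to `a⁻³`, and `-3` is invertible modulo `m`: for `m = 2ⁱ ≤ 4n`
one has `(-3)ⁿ ≡ 1 (mod m)` because `v₂(3ⁿ - 1) ≥ v₂(n) + 2`. Hence `⟨a⟩` is normal, and so is
`⟨a⁴⟩`. Since `a⁴` is itself a commutator and the two generators commute modulo `⟨a⁴⟩`, this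
subgroup is the derived subgroup. The affine action of `G(m, n)` on `ZMod m` with
`a ↦ (x ↦ x + 1)` and `b ↦ (x ↦ (-3)⁻¹ x)` shows that `a` has order exactly `m`, so `⟨a⁴⟩` is
cyclic of order `m / 4`.
-/

open Subgroup
open scoped commutatorElement

section

variable {G : Type*} [Group G]

theorem commutator_le_of_closure_pair_eq_top {x y : G} (hxy : closure {x, y} = ⊤)
    {N : Subgroup G} [N.Normal] (h : ⁅x, y⁆ ∈ N) : commutator G ≤ N := by
  let q := QuotientGroup.mk' N
  have hq_surj : Function.Surjective q := QuotientGroup.mk'_surjective N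
  have hq : closure {q x, q y} = ⊤ := by
    rw [← Set.image_pair, ← MonoidHom.map_closure, hxy, map_top_of_surjective _ hq_surj]
  have hcomm : Commute (q x) (q y) := by
    rw [← commutatorElement_eq_one_iff_commute, ← map_commutatorElement]
    exact (QuotientGroup.eq_one_iff _).mpr h
  have hcenter : center (G ⧸ N) = ⊤ := by
    have hS : ({q x, q y} : Set _) ⊆ centralizer {q x, q y} := by
      rintro _ (rfl | rfl) _ (rfl | rfl)
      exacts [rfl, hcomm.eq.symm, hcomm.eq, rfl]
    rw [eq_top_iff, ← centralizer_univ, ← coe_top, ← hq, centralizer_closure]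
    exact (closure_le _).mpr hS
  have hbot : (commutator G).map q = ⊥ := by
    rw [_root_.commutator_def, map_commutator, map_top_of_surjective _ hq_surj,
      ← _root_.commutator_def, commutator_eq_bot_iff_center_eq_top, hcenter]
  rwa [Subgroup.map_eq_bot_iff, QuotientGroup.ker_mk'] at hbot

theorem zpowers_normal_of_closure_pair_eq_top {x y : G} (hxy : closure {x, y} = ⊤)
    (h₁ : y * x * y⁻¹ ∈ zpowers x) (h₂ : y⁻¹ * x * y ∈ zpowers x) : (zpowers x).Normal := by
  rw [← normalizer_eq_top_iff, eq_top_iff, ← hxy, closure_le, Set.insert_subset_iff,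
    Set.singleton_subset_iff]
  refine ⟨le_normalizer (mem_zpowers x), mem_normalizer_iff.mpr fun g => ⟨?_, fun hg => ?_⟩⟩
  · rintro ⟨k, rfl⟩
    rw [← conj_zpow]
    exact zpow_mem h₁ k
  · obtain ⟨k, hk⟩ := mem_zpowers_iff.mp hg
    have : g = (y⁻¹ * x * y⁻¹⁻¹) ^ k := by rw [conj_zpow, hk]; group
    rw [this, inv_inv]
    exact zpow_mem h₂ k

theorem Subgroup.Normal.zpowers_pow {x : G} (h : (zpowers x).Normal) (k : ℕ) :
    (zpowers (x ^ k)).Normal := by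
  refine ⟨fun _ hg c => ?_⟩
  obtain ⟨i, rfl⟩ := mem_zpowers_iff.mp hg
  obtain ⟨j, hj⟩ := mem_zpowers_iff.mp (h.conj_mem x (mem_zpowers x) c)
  refine mem_zpowers_iff.mpr ⟨j * i, ?_⟩
  rw [← conj_zpow, ← conj_pow, ← hj, ← zpow_natCast, ← zpow_natCast, ← zpow_mul, ← zpow_mul,
    ← zpow_mul]
  ring_nf

end

theorem two_pow_dvd_three_pow_sub_one {n : ℕ} (hn : n ≠ 0) (he : Even n) :
    2 ^ (padicValNat 2 n + 2) ∣ 3 ^ n - 1 :=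
  (pow_dvd_pow 2 (padicValNat.pow_two_sub_one_ge (by norm_num) (by norm_num) hn he)).trans
    pow_padicValNat_dvd

theorem ZMod.neg_three_pow_eq_one {m n : ℕ} (hn : n ≠ 0) (he : Even n)
    (hm : m ∣ 2 ^ (padicValNat 2 n + 2)) : (-3 : ZMod m) ^ n = 1 := by
  have h := (ZMod.natCast_eq_zero_iff _ m).mpr (hm.trans (two_pow_dvd_three_pow_sub_one hn he))
  rw [Nat.cast_sub (Nat.one_le_pow _ _ (by norm_num)), sub_eq_zero] at h
  rw [he.neg_pow]
  exact_mod_cast h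

namespace Gmn

variable {m n : ℕ}

local notation "a" => gen_a m n
local notation "b" => gen_b m n

theorem gen_a_pow_m : a ^ m = 1 :=
  PresentedGroup.one_of_mem (by simp [GRels])

-- Mathlib's `⁅g, h⁆` is `g * h * g⁻¹ * h⁻¹`, so the relator `[b, a] = b⁻¹a⁻¹ba` is `⁅b⁻¹, a⁻¹⁆`.
theorem commutatorElement_gen_b_inv_gen_a_inv : ⁅b⁻¹, a⁻¹⁆ = a ^ 4 := by
  have h : PresentedGroup.mk (GRels m n)
      ((FreeGroup.of false)⁻¹ * (FreeGroup.of true)⁻¹ * FreeGroup.of false *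
        FreeGroup.of true * (FreeGroup.of true ^ 4)⁻¹) = 1 :=
    PresentedGroup.one_of_mem (by simp [GRels])
  rw [commutatorElement_def, inv_inv, inv_inv, ← mul_inv_eq_one]
  simp only [map_mul, map_inv, map_pow] at h
  exact h

theorem gen_b_inv_mul_gen_a_mul_gen_b_s4 : b⁻¹ * a * b = a ^ (-3 : ℤ) := by
  have h := commutatorElement_gen_b_inv_gen_a_inv (m := m) (n := n)
  rw [commutatorElement_def, inv_inv, inv_inv] at h
  calc b⁻¹ * a * b = (b⁻¹ * a⁻¹ * b * a * a⁻¹)⁻¹ := by group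
    _ = a ^ (-3 : ℤ) := by rw [h]; group

theorem gen_a_zpow_eq_zpow {i j : ℤ} (h : (i : ZMod m) = j) : a ^ i = a ^ j :=
  zpow_eq_zpow_iff_modEq.mpr <| ((ZMod.intCast_eq_intCast_iff _ _ _).mp h).of_dvd <|
    Int.natCast_dvd_natCast.mpr (orderOf_dvd_of_pow_eq_one gen_a_pow_m)

theorem closure_gen_a_gen_b_s4 : closure {a, b} = ⊤ := by
  rw [Set.pair_comm, ← PresentedGroup.closure_range_of, Bool.range_eq]
  rfl

theorem closure_gen_b_inv_gen_a_inv : closure {b⁻¹, a⁻¹} = ⊤ := by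
  rw [← Set.inv_singleton, ← Set.inv_insert, closure_inv, Set.pair_comm, closure_gen_a_gen_b_s4]

theorem gen_b_mul_gen_a_mul_gen_b_inv (hn : n ≠ 0) (h3 : (-3 : ZMod m) ^ n = 1) :
    b * a * b⁻¹ = a ^ ((-3 : ℤ) ^ (n - 1)) := by
  have ha : a ^ (-3 * (-3 : ℤ) ^ (n - 1)) = a := by
    refine (gen_a_zpow_eq_zpow ?_).trans (zpow_one a)
    push_cast
    rw [← pow_succ', Nat.sub_add_cancel (Nat.one_le_iff_ne_zero.mpr hn), h3]
  calc b * a * b⁻¹ = b * (b⁻¹ * a * b⁻¹⁻¹) ^ (-3 : ℤ) ^ (n - 1) * b⁻¹ := by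
        rw [inv_inv, gen_b_inv_mul_gen_a_mul_gen_b_s4, ← zpow_mul, ha]
    _ = a ^ ((-3 : ℤ) ^ (n - 1)) := by rw [conj_zpow]; group

theorem zpowers_gen_a_normal (hn : n ≠ 0) (h3 : (-3 : ZMod m) ^ n = 1) : (zpowers a).Normal :=
  zpowers_normal_of_closure_pair_eq_top closure_gen_a_gen_b_s4
    ⟨_, (gen_b_mul_gen_a_mul_gen_b_inv hn h3).symm⟩ ⟨-3, gen_b_inv_mul_gen_a_mul_gen_b_s4.symm⟩

theorem commutator_eq_zpowers_gen_a_pow_four (hn : n ≠ 0) (h3 : (-3 : ZMod m) ^ n = 1) :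
    commutator (Gmn m n) = zpowers (a ^ 4) := by
  have : (zpowers (a ^ 4)).Normal := (zpowers_gen_a_normal hn h3).zpowers_pow 4
  refine le_antisymm (commutator_le_of_closure_pair_eq_top closure_gen_b_inv_gen_a_inv ?_) ?_
  · rw [commutatorElement_gen_b_inv_gen_a_inv]
    exact mem_zpowers _
  · rw [zpowers_le, ← commutatorElement_gen_b_inv_gen_a_inv]
    exact commutator_mem_commutator (mem_top _) (mem_top _)

theorem exists_monoidHom_gen_a_eq_addRight (hn : n ≠ 0) (h3 : (-3 : ZMod m) ^ n = 1) :
    ∃ ρ : Gmn m n →* Equiv.Perm (ZMod m), ρ a = Equiv.addRight 1 := by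
  let u := (IsUnit.of_pow_eq_one h3 hn).unit
  refine ⟨PresentedGroup.toGroup (f := fun s => cond s (Equiv.addRight 1) (MulAction.toPerm u⁻¹))
    ?_, PresentedGroup.toGroup.of _⟩
  rintro r (rfl | rfl | rfl)
  · ext x
    simp
  · have hu : u⁻¹ ^ n = 1 := by
      rw [inv_pow, inv_eq_one]
      exact Units.ext h3
    rw [map_pow, FreeGroup.lift_apply_of]
    exact (map_pow (MulAction.toPermHom (ZMod m)ˣ (ZMod m)) u⁻¹ n).symm.trans (by rw [hu, map_one])
  · have hu : (u : ZMod m) = -3 := IsUnit.unit_spec _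
    ext x
    simp only [map_mul, map_inv, map_pow, FreeGroup.lift_apply_of, cond_false, cond_true,
      Equiv.neg_addRight, Equiv.nsmul_addRight, nsmul_eq_mul, Nat.cast_ofNat, mul_one,
      Equiv.Perm.coe_mul, Equiv.Perm.coe_inv, Equiv.coe_addRight, Function.comp_apply,
      MulAction.toPerm_apply, MulAction.toPerm_symm_apply, smul_add, Units.smul_def, smul_eq_mul,
      smul_neg, inv_inv, Units.mul_inv_cancel_left, Units.mul_inv, Equiv.Perm.coe_one, id_eq]
    linear_combination -hu

theorem orderOf_gen_a (hn : n ≠ 0) (h3 : (-3 : ZMod m) ^ n = 1) : orderOf a = m := by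
  obtain ⟨ρ, hρ⟩ := exists_monoidHom_gen_a_eq_addRight hn h3
  refine (orderOf_dvd_of_pow_eq_one gen_a_pow_m).antisymm ?_
  have h : (ρ a ^ orderOf a) 0 = 0 := by rw [← map_pow, pow_orderOf_eq_one, map_one]; rfl
  rw [hρ, Equiv.Perm.coe_pow, Equiv.coe_addRight, add_right_iterate] at h
  exact (ZMod.natCast_eq_zero_iff _ _).mp (by simpa using h)

end Gmn

/-- The derived subgroup of `G(m, n)` is the subgroup generated by `a^4`, which is
cyclic of order `m / 4`. -/
theorem Gmn_commutator (m n : ℕ) (hm : ∃ i, m = 2 ^ i) (hn : ∃ j, n = 2 ^ j)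
    (hm16 : 16 ≤ m) (hn4 : 4 ≤ n) (hmn : m ≤ 4 * n) :
    commutator (Gmn m n) = Subgroup.closure {gen_a m n ^ 4} ∧
    IsCyclic (Subgroup.closure {gen_a m n ^ 4} : Subgroup (Gmn m n)) ∧
    Nat.card (Subgroup.closure {gen_a m n ^ 4} : Subgroup (Gmn m n)) = m / 4 := by
  obtain ⟨i, rfl⟩ := hm
  obtain ⟨j, rfl⟩ := hn
  have hj : j ≠ 0 := by rintro rfl; norm_num at hn4
  have h4 : 4 ∣ 2 ^ i :=
    pow_dvd_pow 2 ((Nat.pow_le_pow_iff_right one_lt_two).mp (by omega : 2 ^ 2 ≤ 2 ^ i))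
  have hij : i ≤ j + 2 := (Nat.pow_le_pow_iff_right one_lt_two).mp (by rw [pow_add]; omega)
  have hn0 : 2 ^ j ≠ 0 := pow_ne_zero j two_ne_zero
  have h3 : (-3 : ZMod (2 ^ i)) ^ 2 ^ j = 1 :=
    ZMod.neg_three_pow_eq_one hn0 (Nat.even_pow.mpr ⟨even_two, hj⟩)
      (by rw [padicValNat.prime_pow]; exact pow_dvd_pow 2 hij)
  rw [← zpowers_eq_closure]
  refine ⟨Gmn.commutator_eq_zpowers_gen_a_pow_four hn0 h3, inferInstance, ?_⟩
  rw [Nat.card_zpowers, orderOf_pow' _ four_ne_zero, Gmn.orderOf_gen_a hn0 h3,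
    Nat.gcd_eq_right h4]
end

section
/- Let A be a finite abelian 2-group and let B be a group containing A as a subgroup of index 2. If B is generated by involutions, then every element of A can be written as a product of an element of order dividing 2 in A and an element of A that is inverted by conjugation by some element of B \ A; equivalently, A is the product of the subgroup Ω(A) = {x ∈ A : x² = 1} with the set of elements of A inverted by some element of B outside A. -/
/-!
Fix an involution `c ∉ A`; one exists because the involutions generate `B` and `A ≠ B`.
Conjugation by `c` preserves `Ω(A)` and the subgroup `I ≤ A` of elements inverted by `c`, so `c`
normalizes `H = Ω(A) I` and `H ∪ H c` is a subgroup. It contains every involution `x`: either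
`x ∈ Ω(A)`, or `x ∉ A` and then `x c ∈ I`. Hence `H ∪ H c = B`, and as `H c` misses `A`,
`A = H`.
-/

open Subgroup
open scoped Pointwise

section CommGroup

variable {G : Type*} [CommGroup G]

theorem Subgroup.map_ker_powMonoidHom_le (σ : G →* G) (n : ℕ) :
    (powMonoidHom n : G →* G).ker.map σ ≤ (powMonoidHom n).ker := by
  rintro _ ⟨x, hx, rfl⟩
  simp_all [← map_pow]

theorem Subgroup.map_eqLocus_invMonoidHom_le (σ : G →* G) :
    (σ.eqLocus invMonoidHom).map σ ≤ σ.eqLocus invMonoidHom := by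
  rintro _ ⟨x, hx, rfl⟩
  change σ (σ x) = (σ x)⁻¹
  rw [← map_inv, ← show σ x = x⁻¹ from hx]

end CommGroup

section Group

variable {B : Type*} [Group B]

theorem Subgroup.mem_normalizer_of_sq_eq_one {H : Subgroup B} {c : B} (hc : c ^ 2 = 1)
    (hcH : ∀ x ∈ H, c⁻¹ * x * c ∈ H) : c ∈ normalizer (H : Set B) := by
  refine mem_normalizer_iff''.2 fun x => ⟨hcH x, fun hx => ?_⟩
  have hconj2 : c⁻¹ * (c⁻¹ * x * c) * c = (c ^ 2)⁻¹ * x * c ^ 2 := by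
    simp only [pow_two, mul_inv_rev, mul_assoc]
  simpa [hconj2, hc] using hcH _ hx

theorem Subgroup.le_of_closure_eq_top_of_mem_or_mul_mem {A H : Subgroup B} {S : Set B} {c : B}
    (hHA : H ≤ A) (hcA : c ∉ A) (hc : c ^ 2 = 1) (hcH : c ∈ normalizer (H : Set B))
    (hS : closure S = ⊤) (hSH : ∀ x ∈ S, x ∈ H ∨ x * c ∈ H) : A ≤ H := by
  have hSK : closure S ≤ H ⊔ zpowers c := by
    refine (closure_le _).2 fun x hx => ?_
    rcases hSH x hx with hxH | hxcH
    · exact mem_sup_left hxH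
    · simpa using mul_mem (mem_sup_left hxcH) (mem_sup_right (inv_mem (mem_zpowers c)))
  intro a ha
  obtain ⟨h, hh, _, ⟨n, rfl⟩, rfl⟩ : a ∈ (H : Set B) * (zpowers c : Set B) := by
    rw [← coe_mul_of_right_le_normalizer_left H (zpowers c) ((zpowers_le).2 hcH)]
    exact hSK (hS ▸ mem_top a)
  rcases Int.even_or_odd' n with ⟨k, rfl | rfl⟩
  · simpa [zpow_mul, hc] using hh
  · refine absurd ?_ hcA
    simpa [zpow_add, zpow_mul, hc, (A.mul_mem_cancel_left (hHA hh))] using ha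

theorem conj_mul_eq_inv_of_sq_eq_one {x c : B} (hx : x ^ 2 = 1) (hc : c ^ 2 = 1) :
    c⁻¹ * (x * c) * c = (x * c)⁻¹ := by
  have hxinv : x⁻¹ = x := by rw [inv_eq_iff_mul_eq_one, ← pow_two, hx]
  rw [mul_inv_rev, hxinv, mul_assoc, mul_assoc, ← pow_two, hc, mul_one]

open scoped IsMulCommutative in
theorem exists_sq_eq_one_mul_conj_eq_inv {A : Subgroup B} [IsMulCommutative A]
    (hindex : A.index = 2) {S : Set B} (hS : closure S = ⊤) (hS2 : ∀ x ∈ S, x ^ 2 = 1)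
    {c : B} (hcA : c ∉ A) (hc : c ^ 2 = 1) :
    ∀ a ∈ A, ∃ s t : B, s ∈ A ∧ t ∈ A ∧ s ^ 2 = 1 ∧ c⁻¹ * t * c = t⁻¹ ∧
      a = s * t := by
  have := normal_of_index_eq_two hindex
  set σ : A →* A := (MulAut.conjNormal (H := A) c⁻¹).toMonoidHom
  have hσ (x : A) : (σ x : B) = c⁻¹ * x * c := by simp [σ]
  -- the subgroup `Ω(A) I` of the header, as a subgroup of `B`
  set H : Subgroup B := ((powMonoidHom 2 : A →* A).ker ⊔ σ.eqLocus invMonoidHom).map A.subtype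
  have hcH : c ∈ normalizer (H : Set B) := by
    refine mem_normalizer_of_sq_eq_one hc ?_
    rintro _ ⟨x, hx, rfl⟩
    refine ⟨σ x, (map_sup _ _ σ).trans_le (sup_le_sup (map_ker_powMonoidHom_le σ 2)
      (map_eqLocus_invMonoidHom_le σ)) (mem_map_of_mem σ hx), hσ x⟩
  have hSH (x : B) (hxS : x ∈ S) : x ∈ H ∨ x * c ∈ H := by
    by_cases hxA : x ∈ A
    · exact .inl ⟨⟨x, hxA⟩, mem_sup_left (Subtype.ext (hS2 x hxS)), rfl⟩
    · have hxcA : x * c ∈ A := (mul_mem_iff_of_index_two hindex).2 (iff_of_false hxA hcA)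
      refine .inr ⟨⟨x * c, hxcA⟩, mem_sup_right (Subtype.ext ?_), rfl⟩
      exact (hσ _).trans (conj_mul_eq_inv_of_sq_eq_one (hS2 x hxS) hc)
  intro a ha
  obtain ⟨u, hu, rfl⟩ :=
    le_of_closure_eq_top_of_mem_or_mul_mem (map_subtype_le _) hcA hc hcH hS hSH ha
  obtain ⟨s, hs, t, ht, rfl⟩ := mem_sup.1 hu
  exact ⟨s, t, s.2, t.2, congrArg Subtype.val hs,
    (hσ t).symm.trans (congrArg Subtype.val ht), rfl⟩

end Group

theorem decomposition_of_index_two_abelian_subgroup_general (B : Type*) [Group B]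
    (A : Subgroup B)
    (habel : ∀ x y : A, x * y = y * x)
    (hindex : A.index = 2)
    (hgen : Subgroup.closure {x : B | orderOf x = 2} = ⊤) :
    ∀ a ∈ A, ∃ s t : B, s ∈ A ∧ t ∈ A ∧ s ^ 2 = 1 ∧
      (∃ c : B, c ∉ A ∧ c⁻¹ * t * c = t⁻¹) ∧ a = s * t := by
  have : IsMulCommutative A := ⟨⟨habel⟩⟩
  have hsq (x : B) (hx : orderOf x = 2) : x ^ 2 = 1 := hx ▸ pow_orderOf_eq_one x
  obtain ⟨c, hc, hcA⟩ : ∃ c ∈ {x : B | orderOf x = 2}, c ∉ A := by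
    by_contra! h
    have hAtop : A = ⊤ := eq_top_iff.2 (hgen ▸ (closure_le A).2 h)
    simp [hAtop] at hindex
  intro a ha
  obtain ⟨s, t, hs, ht, hs2, hti, rfl⟩ :=
    exists_sq_eq_one_mul_conj_eq_inv hindex hgen hsq hcA (hsq c hc) a ha
  exact ⟨s, t, hs, ht, hs2, ⟨c, hcA, hti⟩, rfl⟩

/-- If `B` is generated by involutions and contains a finite abelian 2-group `A` as
a subgroup of index 2, then every element of `A` is the product of an element of `A`
of order dividing 2 and an element of `A` inverted by some element of `B \ A`. -/
theorem decomposition_of_index_two_abelian_subgroup (B : Type*) [Group B]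
    (A : Subgroup B) [Finite A]
    (habel : ∀ x y : A, x * y = y * x)
    (hcard : ∃ k, Nat.card A = 2 ^ k)
    (hindex : A.index = 2)
    (hgen : Subgroup.closure {x : B | orderOf x = 2} = ⊤) :
    ∀ a ∈ A, ∃ s t : B, s ∈ A ∧ t ∈ A ∧ s ^ 2 = 1 ∧
      (∃ c : B, c ∉ A ∧ c⁻¹ * t * c = t⁻¹) ∧ a = s * t :=
  decomposition_of_index_two_abelian_subgroup_general B A habel hindex hgen
end
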